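/- Let H be a strategic game and assume property D(α) holds for all ordinals α. Then LS̄ is order independent: if R is any relaxation of LS̄ and α is an ordinal with R^{α+1} = R^α, then R^α equals the greatest fixpoint of GS̄; in particular any two outcomes of relaxations of LS̄ coincide. -/

import Mathlib

universe u

/-- Transfinite iterations of an operator on a complete lattice:
`F^0 = ⊤`, `F^(α+1) = F (F^α)`, and `F^β = ⨅_{α<β} F^α` for limit `β`. -/
noncomputable def iterate {D : Type u} [CompleteLattice D] (F : D → D) (α : Ordinal.{0}) : D :=
  Ordinal.limitRecOn α ⊤ (fun _ ih => F ih) (fun β _ ih => ⨅ (γ : Ordinal) (h : γ < β), ih γ h)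

/-- `R` is a relaxation of `F`. -/
def Relaxation {D : Type u} [CompleteLattice D] (F R : D → D) : Prop :=
  ∀ α : Ordinal.{0},
    F (iterate R α) ≤ R (iterate R α) ∧
    (F (iterate R α) ≤ iterate R α → R (iterate R α) ≤ iterate R α) ∧
    (R (iterate R α) = iterate R α → F (iterate R α) = iterate R α)

section Games

variable {n : ℕ} {T : Fin n → Type u}

/-- `GR` operator: strategies that are a best response *in the initial game* to
some opponent belief held in `G`. -/
def GR (p : ∀ i : Fin n, (∀ j, T j) → ℝ) (G : ∀ i, Set (T i)) : ∀ i, Set (T i) :=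
  fun i => {s : T i | ∃ μ : ∀ j, T j, (∀ j, j ≠ i → μ j ∈ G j) ∧
    ∀ s' : T i, p i (Function.update μ i s') ≤ p i (Function.update μ i s)}

/-- `LR` operator: strategies that are a best response *in `G`* to
some opponent belief held in `G`. -/
def LR (p : ∀ i : Fin n, (∀ j, T j) → ℝ) (G : ∀ i, Set (T i)) : ∀ i, Set (T i) :=
  fun i => {s : T i | ∃ μ : ∀ j, T j, (∀ j, j ≠ i → μ j ∈ G j) ∧
    ∀ s' ∈ G i, p i (Function.update μ i s') ≤ p i (Function.update μ i s)}

/-- `s'` strictly dominates `s` on the restriction `G`. -/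
def Dom (p : ∀ i : Fin n, (∀ j, T j) → ℝ) (G : ∀ i, Set (T i)) (i : Fin n)
    (s' s : T i) : Prop :=
  ∀ μ : ∀ j, T j, (∀ j, j ≠ i → μ j ∈ G j) →
    p i (Function.update μ i s) < p i (Function.update μ i s')

/-- `GS` operator: strategies not strictly dominated on `G` by any strategy of the initial game. -/
def GS (p : ∀ i : Fin n, (∀ j, T j) → ℝ) (G : ∀ i, Set (T i)) : ∀ i, Set (T i) :=
  fun i => {s : T i | ¬ ∃ s' : T i, Dom p G i s' s}

/-- `LS` operator: strategies not strictly dominated on `G` by any strategy in `G`. -/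
def LS (p : ∀ i : Fin n, (∀ j, T j) → ℝ) (G : ∀ i, Set (T i)) : ∀ i, Set (T i) :=
  fun i => {s : T i | ¬ ∃ s' ∈ G i, Dom p G i s' s}

/-- Property B: to each belief in the initial game a best response (in the initial game) exists. -/
def PropB (p : ∀ i : Fin n, (∀ j, T j) → ℝ) : Prop :=
  ∀ (i : Fin n) (μ : ∀ j, T j), ∃ s : T i, ∀ s' : T i,
    p i (Function.update μ i s') ≤ p i (Function.update μ i s)

/-- Property D(α). -/
def PropD (p : ∀ i : Fin n, (∀ j, T j) → ℝ) (α : Ordinal.{0}) : Prop :=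
  ∀ R : (∀ i, Set (T i)) → (∀ i, Set (T i)), Relaxation (fun G => LS p G ⊓ G) R →
    ∀ (i : Fin n) (s : T i), (∃ s' : T i, Dom p (iterate R α) i s' s) →
      ∃ s' ∈ iterate R α i, Dom p (iterate R α) i s' s

/-- Property C(α). -/
def PropC (p : ∀ i : Fin n, (∀ j, T j) → ℝ) (α : Ordinal.{0}) : Prop :=
  ∀ R : (∀ i, Set (T i)) → (∀ i, Set (T i)), Relaxation (fun G => LS p G ⊓ G) R →
    ∀ (i : Fin n) (s : T i), (∃ s' : T i, Dom p (iterate R α) i s' s) →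
      ∃ s'' : T i, Dom p (iterate R α) i s'' s ∧ ¬ ∃ s' : T i, Dom p (iterate R α) i s' s''

end Games

/-!
Every fixpoint `G` of `GS̄` lies below every stage `R^β` of a relaxation `R` of `LS̄`: if `G ≤ X`,
then a strategy of `G` is undominated on `G`, hence on the larger `X`, so `G ≤ LS̄ X ≤ R X`.
Conversely, once `R^α` is a fixpoint of `R` it is a fixpoint of `LS̄`, and property `D(α)` upgrades
"not dominated from within `R^α`" to "not dominated at all", so `R^α` is a fixpoint of `GS̄`.
-/

section Iterate

variable {D : Type u} [CompleteLattice D] (R : D → D)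

theorem iterate_zero : iterate R 0 = ⊤ :=
  Ordinal.limitRecOn_zero _ _ _

theorem iterate_succ (α : Ordinal.{0}) : iterate R (α + 1) = R (iterate R α) :=
  Ordinal.limitRecOn_add_one _ _ _ _

theorem iterate_limit {β : Ordinal.{0}} (hβ : Order.IsSuccLimit β) :
    iterate R β = ⨅ (γ : Ordinal) (_ : γ < β), iterate R γ :=
  Ordinal.limitRecOn_limit _ _ _ _ hβ

variable {R}

theorem Relaxation.le_iterate {F : D → D} (hR : Relaxation F R) {a : D}
    (ha : ∀ x, a ≤ x → a ≤ F x) (β : Ordinal.{0}) : a ≤ iterate R β := by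
  induction β using Ordinal.limitRecOn with
  | zero => simp [iterate_zero]
  | add_one β ih => exact (iterate_succ R β).symm ▸ (ha _ ih).trans (hR β).1
  | limit β hβ ih =>
    rw [iterate_limit R hβ]
    exact le_iInf₂ ih

theorem Relaxation.fixpoint_of_iterate_succ_eq {F : D → D} (hR : Relaxation F R)
    {α : Ordinal.{0}} (hα : iterate R (α + 1) = iterate R α) :
    F (iterate R α) = iterate R α :=
  (hR α).2.2 ((iterate_succ R α).symm.trans hα)

end Iterate

section Games

variable {n : ℕ} {T : Fin n → Type u} {p : ∀ i : Fin n, (∀ j, T j) → ℝ}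

theorem Dom.anti {G G' : ∀ i, Set (T i)} (hGG' : G ≤ G') {i : Fin n} {s' s : T i}
    (h : Dom p G' i s' s) : Dom p G i s' s :=
  fun μ hμ => h μ fun j hj => hGG' j (hμ j hj)

theorem GS_mono : Monotone (GS p) :=
  fun _ _ hGG' _ _ hs ⟨s', hdom⟩ => hs ⟨s', hdom.anti hGG'⟩

theorem GS_le_LS (G : ∀ i, Set (T i)) : GS p G ≤ LS p G :=
  fun _ _ hs ⟨s', _, hdom⟩ => hs ⟨s', hdom⟩

theorem le_LS_inf_of_GS_inf_eq {G X : ∀ i, Set (T i)} (hG : GS p G ⊓ G = G) (hGX : G ≤ X) :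
    G ≤ LS p X ⊓ X :=
  le_inf (hG.symm.le.trans (inf_le_left.trans ((GS_mono hGX).trans (GS_le_LS X)))) hGX

theorem GS_inf_eq_of_LS_inf_eq {X : ∀ i, Set (T i)} (hX : LS p X ⊓ X = X)
    (hD : ∀ (i : Fin n) (s : T i), (∃ s', Dom p X i s' s) → ∃ s' ∈ X i, Dom p X i s' s) :
    GS p X ⊓ X = X :=
  inf_eq_right.2 fun i s hs hdom => (hX.symm.le.trans inf_le_left) i hs (hD i s hdom)

end Games

theorem stmt_16_general {n : ℕ} {T : Fin n → Type u}
    (p : ∀ i : Fin n, (∀ j, T j) → ℝ) (hD : ∀ α : Ordinal.{0}, PropD p α) :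
    ∀ R, Relaxation (fun G => LS p G ⊓ G) R →
      ∀ α : Ordinal.{0}, iterate R (α + 1) = iterate R α →
        IsGreatest {G : ∀ i, Set (T i) | GS p G ⊓ G = G} (iterate R α) := by
  intro R hR α hα
  refine ⟨GS_inf_eq_of_LS_inf_eq (hR.fixpoint_of_iterate_succ_eq hα) (hD α R hR), ?_⟩
  exact fun G hG => hR.le_iterate (fun X hGX => le_LS_inf_of_GS_inf_eq hG hGX) α

theorem stmt_16 {n : ℕ} (hn : 2 ≤ n) {T : Fin n → Type u} [∀ i, Nonempty (T i)]
    (p : ∀ i : Fin n, (∀ j, T j) → ℝ) (hD : ∀ α : Ordinal.{0}, PropD p α) :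
    ∀ R, Relaxation (fun G => LS p G ⊓ G) R →
      ∀ α : Ordinal.{0}, iterate R (α + 1) = iterate R α →
        IsGreatest {G : ∀ i, Set (T i) | GS p G ⊓ G = G} (iterate R α) :=
  stmt_16_general p hD
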